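/- arXiv:1311.2973 — 6 statements merged into one kernel-verified Lean document; each statement's English description precedes it below -/
import Mathlib

section
/- Let B be a Boolean algebra, let g and h be unary join-hemimorphisms on B, and let c ∈ B. If g x ≤ h x holds for every x ∈ B with x ≤ c, then for all prime filters F and G of B such that c ∈ G and g a ∈ F for every a ∈ G, it also holds that h a ∈ F for every a ∈ G. (In the terminology of the Stone dual: if B satisfies the guarded axiom ∀x (x ≤ c → g(x) ≤ h(x)), then the dual relational space satisfies ∀F,G (G ∈ C ∧ r_g(F,G) → r_h(F,G)), where C(G) holds iff c ∈ G.) -/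
/-- A prime filter of a Boolean algebra. -/
def IsPrimeFilter {B : Type*} [BooleanAlgebra B] (F : Set B) : Prop :=
  ⊤ ∈ F ∧ ⊥ ∉ F ∧ (∀ x y : B, x ∈ F → x ≤ y → y ∈ F) ∧
    (∀ x y : B, x ∈ F → y ∈ F → x ⊓ y ∈ F) ∧
    (∀ x y : B, x ⊔ y ∈ F → x ∈ F ∨ y ∈ F)

/-- A unary join-hemimorphism. -/
def IsJoinHemi {B : Type*} [BooleanAlgebra B] (g : B → B) : Prop :=
  (∀ x y : B, g (x ⊔ y) = g x ⊔ g y) ∧ g ⊥ = ⊥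

/-! Since `c ∈ G`, also `a ⊓ c ∈ G`, so `g (a ⊓ c) ∈ F`; the guarded axiom applies to `a ⊓ c ≤ c`
and monotonicity of `h` gives `g (a ⊓ c) ≤ h (a ⊓ c) ≤ h a`. -/

section

variable {B : Type*} [BooleanAlgebra B]

theorem IsJoinHemi.monotone {g : B → B} (hg : IsJoinHemi g) : Monotone g := by
  intro x y hxy
  rw [← sup_eq_right.mpr hxy, hg.1]
  exact le_sup_left

theorem IsPrimeFilter.mem_of_le {F : Set B} (hF : IsPrimeFilter F) {x y : B} (hx : x ∈ F)
    (hxy : x ≤ y) : y ∈ F :=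
  hF.2.2.1 x y hx hxy

theorem IsPrimeFilter.inf_mem {F : Set B} (hF : IsPrimeFilter F) {x y : B} (hx : x ∈ F)
    (hy : y ∈ F) : x ⊓ y ∈ F :=
  hF.2.2.2.1 x y hx hy

end

theorem stmt_0_general {B : Type*} [BooleanAlgebra B] (g h : B → B)
    (hh : IsJoinHemi h) (c : B)
    (hax : ∀ x : B, x ≤ c → g x ≤ h x)
    (F G : Set B) (hF : IsPrimeFilter F) (hG : IsPrimeFilter G)
    (hcG : c ∈ G) (hrg : ∀ a ∈ G, g a ∈ F) :
    ∀ a ∈ G, h a ∈ F := by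
  intro a haG
  have hacF : g (a ⊓ c) ∈ F := hrg _ (hG.inf_mem haG hcG)
  exact hF.mem_of_le hacF ((hax _ inf_le_right).trans (hh.monotone inf_le_left))

theorem stmt_0 {B : Type*} [BooleanAlgebra B] (g h : B → B)
    (hg : IsJoinHemi g) (hh : IsJoinHemi h) (c : B)
    (hax : ∀ x : B, x ≤ c → g x ≤ h x)
    (F G : Set B) (hF : IsPrimeFilter F) (hG : IsPrimeFilter G)
    (hcG : c ∈ G) (hrg : ∀ a ∈ G, g a ∈ F) :
    ∀ a ∈ G, h a ∈ F :=
  stmt_0_general g h hh c hax F G hF hG hcG hrg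
end

section
/- Let B be a Boolean algebra, let f, g and h be unary join-hemimorphisms on B, and let c ∈ B. If f(g x) ≤ h x holds for every x ∈ B with x ≤ c, then for all prime filters F and G of B such that c ∈ G and such that there exists a prime filter H with (f a ∈ F for every a ∈ H) and (g a ∈ H for every a ∈ G), it holds that h a ∈ F for every a ∈ G. (Dually: if B satisfies ∀x (x ≤ c → f(g(x)) ≤ h(x)), then the dual relational space satisfies ∀F,G (G ∈ C ∧ (r_f ∘ r_g)(F,G) → r_h(F,G)).) -/
theorem stmt_1_general {B : Type*} [BooleanAlgebra B] (f g h : B → B)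
    (hh : IsJoinHemi h) (c : B)
    (hax : ∀ x : B, x ≤ c → f (g x) ≤ h x)
    (F G : Set B) (hF : IsPrimeFilter F) (hG : IsPrimeFilter G)
    (hcG : c ∈ G)
    (hcomp : ∃ H : Set B, IsPrimeFilter H ∧ (∀ a ∈ H, f a ∈ F) ∧ (∀ a ∈ G, g a ∈ H)) :
    ∀ a ∈ G, h a ∈ F := by
  intro a haG
  obtain ⟨H, -, hHF, hGH⟩ := hcomp
  refine hF.mem_of_le (hHF _ (hGH _ (hG.inf_mem haG hcG))) ?_
  calc f (g (a ⊓ c)) ≤ h (a ⊓ c) := hax _ inf_le_right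
    _ ≤ h a := hh.monotone inf_le_left

theorem stmt_1 {B : Type*} [BooleanAlgebra B] (f g h : B → B)
    (hf : IsJoinHemi f) (hg : IsJoinHemi g) (hh : IsJoinHemi h) (c : B)
    (hax : ∀ x : B, x ≤ c → f (g x) ≤ h x)
    (F G : Set B) (hF : IsPrimeFilter F) (hG : IsPrimeFilter G)
    (hcG : c ∈ G)
    (hcomp : ∃ H : Set B, IsPrimeFilter H ∧ (∀ a ∈ H, f a ∈ F) ∧ (∀ a ∈ G, g a ∈ H)) :
    ∀ a ∈ G, h a ∈ F :=
  stmt_1_general f g h hh c hax F G hF hG hcG hcomp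
end

section
/- Let B be a Boolean algebra, let f and g be unary join-hemimorphisms on B, and let c ∈ B. If f(g x) ≤ x holds for every x ∈ B with x ≤ c, then for all prime filters F and G of B such that c ∈ G and such that there exists a prime filter H with (f a ∈ F for every a ∈ H) and (g a ∈ H for every a ∈ G), it follows that F = G. (Dually: if B satisfies ∀x (x ≤ c → f(g(x)) ≤ x), then the dual relational space satisfies ∀F,G (G ∈ C ∧ (r_f ∘ r_g)(F,G) → F = G).) -/
/-! If `G` contains `c` and `H` is an `r_g`-successor of `G` whose `r_f`-successor is `F`, then
for `a ∈ G` also `a ⊓ c ∈ G`, so `f (g (a ⊓ c)) ∈ F`, and the axiom puts `a` above it; hence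
`G ⊆ F`, and prime filters of a Boolean algebra are maximal. -/

namespace IsPrimeFilter

variable {B : Type*} [BooleanAlgebra B] {F G : Set B}

theorem mem_of_le_s2 (hF : IsPrimeFilter F) {x y : B} (hx : x ∈ F) (hxy : x ≤ y) : y ∈ F :=
  hF.2.2.1 x y hx hxy

theorem inf_mem_s2 (hF : IsPrimeFilter F) {x y : B} (hx : x ∈ F) (hy : y ∈ F) : x ⊓ y ∈ F :=
  hF.2.2.2.1 x y hx hy

theorem compl_notMem (hF : IsPrimeFilter F) {x : B} (hx : x ∈ F) : xᶜ ∉ F := fun hxc =>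
  hF.2.1 (inf_compl_eq_bot (a := x) ▸ hF.inf_mem_s2 hx hxc)

theorem mem_or_compl_mem (hF : IsPrimeFilter F) (x : B) : x ∈ F ∨ xᶜ ∈ F :=
  hF.2.2.2.2 x xᶜ (sup_compl_eq_top (x := x) ▸ hF.1)

theorem eq_of_subset (hF : IsPrimeFilter F) (hG : IsPrimeFilter G) (hGF : G ⊆ F) : F = G := by
  refine Set.Subset.antisymm (fun x hx => ?_) hGF
  exact (hG.mem_or_compl_mem x).resolve_right fun hxc => hF.compl_notMem hx (hGF hxc)

end IsPrimeFilter

theorem stmt_2_general {B : Type*} [BooleanAlgebra B] (f g : B → B)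
    (c : B)
    (hax : ∀ x : B, x ≤ c → f (g x) ≤ x)
    (F G : Set B) (hF : IsPrimeFilter F) (hG : IsPrimeFilter G)
    (hcG : c ∈ G)
    (hcomp : ∃ H : Set B, IsPrimeFilter H ∧ (∀ a ∈ H, f a ∈ F) ∧ (∀ a ∈ G, g a ∈ H)) :
    F = G := by
  obtain ⟨H, -, hfH, hgG⟩ := hcomp
  refine hF.eq_of_subset hG fun a ha => ?_
  have hfga : f (g (a ⊓ c)) ∈ F := hfH _ (hgG _ (hG.inf_mem_s2 ha hcG))
  exact hF.mem_of_le_s2 hfga ((hax _ inf_le_right).trans inf_le_left)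

theorem stmt_2 {B : Type*} [BooleanAlgebra B] (f g : B → B)
    (hf : IsJoinHemi f) (hg : IsJoinHemi g) (c : B)
    (hax : ∀ x : B, x ≤ c → f (g x) ≤ x)
    (F G : Set B) (hF : IsPrimeFilter F) (hG : IsPrimeFilter G)
    (hcG : c ∈ G)
    (hcomp : ∃ H : Set B, IsPrimeFilter H ∧ (∀ a ∈ H, f a ∈ F) ∧ (∀ a ∈ G, g a ∈ H)) :
    F = G :=
  stmt_2_general f g c hax F G hF hG hcG hcomp
end

section
/- Let B be a Boolean algebra and let f, g, h be unary join-hemimorphisms on B. Then the following hold for all prime filters F, G of B: (1) if g x ≤ h x for all x ∈ B, then r_g(F,G) implies r_h(F,G); (2) if f(g x) ≤ h x for all x ∈ B, then (r_f ∘ r_g)(F,G) implies r_h(F,G); (3) if f(g x) ≤ x for all x ∈ B, then (r_f ∘ r_g)(F,G) implies F = G. -/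
/-- The canonical relation associated with a join-hemimorphism on the prime filters:
`rDual g F G` iff `g a ∈ F` for every `a ∈ G`. -/
def rDual {B : Type*} [BooleanAlgebra B] (g : B → B) (F G : Set B) : Prop :=
  ∀ a ∈ G, g a ∈ F

/-- Composition of the canonical relations via an intermediate prime filter. -/
def rDualComp {B : Type*} [BooleanAlgebra B] (f g : B → B) (F G : Set B) : Prop :=
  ∃ H : Set B, IsPrimeFilter H ∧ rDual f F H ∧ rDual g H G

section

variable {B : Type*} [BooleanAlgebra B]

/-- For `a ∈ F`, the prime filter `G` contains `a` or `aᶜ`, and `aᶜ ∈ G ⊆ F` would put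
`a ⊓ aᶜ = ⊥` in `F`. -/
theorem IsPrimeFilter.eq_of_subset_s3 {F G : Set B} (hG : IsPrimeFilter G) (hF : IsPrimeFilter F)
    (hGF : G ⊆ F) : G = F := by
  refine hGF.antisymm fun a ha => ?_
  obtain ⟨hGtop, -, -, -, hGprime⟩ := hG
  obtain ⟨-, hFbot, -, hFinf, -⟩ := hF
  rcases hGprime a aᶜ (by rwa [sup_compl_eq_top]) with haG | hacG
  · exact haG
  · have hbot := hFinf a aᶜ ha (hGF hacG)
    rw [inf_compl_eq_bot] at hbot
    exact absurd hbot hFbot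

theorem rDual.mono {g h : B → B} {F G : Set B} (hF : IsPrimeFilter F) (hgh : ∀ x, g x ≤ h x)
    (hr : rDual g F G) : rDual h F G :=
  fun a ha => hF.mem_of_le (hr a ha) (hgh a)

theorem rDualComp.rDual_comp {f g : B → B} {F G : Set B} (hr : rDualComp f g F G) :
    rDual (f ∘ g) F G :=
  let ⟨_, _, hf, hg⟩ := hr
  fun a ha => hf _ (hg a ha)

end

theorem stmt_3_general {B : Type*} [BooleanAlgebra B] (f g h : B → B)
    (F G : Set B) (hF : IsPrimeFilter F) (hG : IsPrimeFilter G) :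
    ((∀ x : B, g x ≤ h x) → rDual g F G → rDual h F G) ∧
    ((∀ x : B, f (g x) ≤ h x) → rDualComp f g F G → rDual h F G) ∧
    ((∀ x : B, f (g x) ≤ x) → rDualComp f g F G → F = G) :=
  ⟨fun hgh => rDual.mono hF hgh,
    fun hfgh hr => hr.rDual_comp.mono hF hfgh,
    -- `rDual id F G` unfolds to `G ⊆ F`.
    fun hfg hr => (hG.eq_of_subset_s3 hF (hr.rDual_comp.mono (h := id) hF hfg)).symm⟩

theorem stmt_3 {B : Type*} [BooleanAlgebra B] (f g h : B → B)
    (hf : IsJoinHemi f) (hg : IsJoinHemi g) (hh : IsJoinHemi h)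
    (F G : Set B) (hF : IsPrimeFilter F) (hG : IsPrimeFilter G) :
    ((∀ x : B, g x ≤ h x) → rDual g F G → rDual h F G) ∧
    ((∀ x : B, f (g x) ≤ h x) → rDualComp f g F G → rDual h F G) ∧
    ((∀ x : B, f (g x) ≤ x) → rDualComp f g F G → F = G) :=
  stmt_3_general f g h F G hF hG
end

section
/- Let S be a partially ordered set and let f, g, h : S → S satisfy: for all x, y ∈ S, if y ≤ g(x) then f(y) ≤ h(x). Define f̄, ḡ, h̄ : LowerSet S → LowerSet S by f̄(U) = lowerClosure (f '' U), and analogously for ḡ and h̄. Then for all lower sets U, V of S, if U ≤ ḡ(V) then f̄(U) ≤ h̄(V). (The flattened composition axiom ∀x,y (y ≤ g(x) → f(y) ≤ h(x)) is preserved when passing from S to its lattice of lower sets with the canonically extended operators.) -/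
theorem stmt_16 {S : Type*} [PartialOrder S] (f g h : S → S)
    (hax : ∀ x y : S, y ≤ g x → f y ≤ h x) :
    ∀ U V : LowerSet S,
      U ≤ lowerClosure (g '' (V : Set S)) →
        lowerClosure (f '' (U : Set S)) ≤ lowerClosure (h '' (V : Set S)) := by
  intro U V hUV
  rw [lowerClosure_le]
  rintro _ ⟨u, hu, rfl⟩
  obtain ⟨_, ⟨v, hv, rfl⟩, hu_le⟩ := hUV hu
  exact ⟨h v, Set.mem_image_of_mem h hv, hax v u hu_le⟩
end

section
/- Let S be a partially ordered set and let f, g : S → S satisfy: for all x, y ∈ S, if y ≤ g(x) then f(y) ≤ x. Define f̄, ḡ : LowerSet S → LowerSet S by f̄(U) = lowerClosure (f '' U) and ḡ(U) = lowerClosure (g '' U). Then for all lower sets U, V of S, if U ≤ ḡ(V) then f̄(U) ≤ V. (The flattened role-inverse axiom ∀x,y (y ≤ g(x) → f(y) ≤ x) is preserved when passing from S to its lattice of lower sets with the canonically extended operators.) -/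
theorem LowerSet.lowerClosure_image_le_of_le_lowerClosure_image {α β : Type*} [Preorder α]
    [Preorder β] {f : β → α} {g : α → β} (hfg : ∀ x y, y ≤ g x → f y ≤ x)
    {U : LowerSet β} {V : LowerSet α} (hUV : U ≤ lowerClosure (g '' V)) :
    lowerClosure (f '' U) ≤ V := by
  rw [lowerClosure_le]
  rintro _ ⟨u, hu, rfl⟩
  obtain ⟨_, ⟨v, hv, rfl⟩, huv⟩ := hUV hu
  exact V.lower (hfg v u huv) hv

theorem stmt_17 {S : Type*} [PartialOrder S] (f g : S → S)
    (hax : ∀ x y : S, y ≤ g x → f y ≤ x) :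
    ∀ U V : LowerSet S,
      U ≤ lowerClosure (g '' (V : Set S)) →
        lowerClosure (f '' (U : Set S)) ≤ V :=
  fun _ _ ↦ LowerSet.lowerClosure_image_le_of_le_lowerClosure_image hax
end
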